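/- Let G = (V, E) be a finite directed graph with a designated source s ∈ V from which every vertex is reachable. Suppose for some i ≥ 1 there is exactly one vertex u whose hop-distance from s equals i. Then for every positive edge weighting w : E → ℝ_{>0} and every vertex v whose hop-distance from s is strictly greater than i, the weighted distances satisfy d_w(s, v) > d_w(s, u). Consequently, u precedes v in every linearization of (G, s). -/

import Mathlib

variable {V : Type*}

/-- `p` is a directed walk from `s` to `v` in the digraph with edge relation `E`:
`p` is the (nonempty) list of visited vertices, starting at `s`, ending at `v`,
and each consecutive pair of vertices is an edge. -/
def IsWalk (E : V → V → Prop) (s v : V) (p : List V) : Prop :=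
  p.Chain' E ∧ p.head? = some s ∧ p.getLast? = some v

/-- `v` is reachable from `s` by a directed walk. -/
def DiReachable (E : V → V → Prop) (s v : V) : Prop :=
  ∃ p, IsWalk E s v p

/-- Hop-distance from `s` to `v`: the minimum number of edges on a directed path
(equivalently, walk) from `s` to `v`.  A walk on `k + 1` vertices has `k` edges. -/
noncomputable def hopDist (E : V → V → Prop) (s v : V) : ℕ :=
  sInf {k | ∃ p, IsWalk E s v p ∧ p.length = k + 1}

/-- The total weight of a walk `p` under the edge weighting `w`:
the sum of `w` over the consecutive pairs of vertices of `p`. -/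
def walkWeight (w : V → V → ℝ) (p : List V) : ℝ :=
  ((p.zip p.tail).map fun e => w e.1 e.2).sum

/-- Weighted distance from `s` to `v` under the weighting `w`:
the minimum total weight of a directed path from `s` to `v`. -/
noncomputable def weightedDist (E : V → V → Prop) (w : V → V → ℝ) (s v : V) : ℝ :=
  sInf {c | ∃ p, IsWalk E s v p ∧ p.Nodup ∧ walkWeight w p = c}

/-- `L` is a linearization of `(G, s)`: `L` is a linear ordering (a duplicate-free list)
of `V \ {s}`, and there exists a positive edge weighting `w` of `G` such that the weighted
distances from `s` of all vertices `≠ s` are pairwise distinct and `L` lists `V \ {s}`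
in increasing order of weighted distance from `s`. -/
def IsLinearization (E : V → V → Prop) (s : V) (L : List V) : Prop :=
  L.Nodup ∧ (∀ v, v ∈ L ↔ v ≠ s) ∧
  ∃ w : V → V → ℝ,
    (∀ u v, E u v → 0 < w u v) ∧
    (∀ x, x ≠ s → ∀ y, y ≠ s → x ≠ y →
      weightedDist E w s x ≠ weightedDist E w s y) ∧
    L.Pairwise (fun x y => weightedDist E w s x < weightedDist E w s y)

/-- `ℓ(G, s)`: the number of linearizations of `(G, s)`. -/
noncomputable def numLinearizations (E : V → V → Prop) (s : V) : ℕ :=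
  {L : List V | IsLinearization E s L}.ncard

/-- `T` is a spanning arborescence of `(G, s)`: a subset of the edges of `G` such that
every vertex `v ≠ s` is reachable from `s` in `T` and has exactly one incoming `T`-edge,
and `s` has no incoming `T`-edge. -/
def IsArborescence (E T : V → V → Prop) (s : V) : Prop :=
  (∀ u v, T u v → E u v) ∧
  (∀ u, ¬ T u s) ∧
  (∀ v, v ≠ s → DiReachable T s v ∧ ∃! u, T u v)

section Aux
variable {E : V → V → Prop} {s v a b : V} {p : List V}

lemma IsWalk.ne_nil (h : IsWalk E s v p) : p ≠ [] := by
  rintro rfl; simp [IsWalk] at h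

lemma isWalk_singleton : IsWalk E s s [s] := ⟨List.isChain_singleton s, rfl, rfl⟩

lemma hopDist_self : hopDist E s s = 0 :=
  Nat.sInf_eq_zero.mpr (Or.inl ⟨[s], isWalk_singleton, rfl⟩)

lemma hopDist_le_of_walk (h : IsWalk E s v p) : hopDist E s v ≤ p.length - 1 := by
  apply Nat.sInf_le
  exact ⟨p, h, by rcases List.exists_cons_of_ne_nil h.ne_nil with ⟨x, t, rfl⟩; simp⟩

lemma hopDist_spec (h : DiReachable E s v) :
    ∃ p, IsWalk E s v p ∧ p.length = hopDist E s v + 1 := by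
  obtain ⟨p, hp⟩ := h
  have hne : {k | ∃ p, IsWalk E s v p ∧ p.length = k + 1}.Nonempty := by
    rcases List.exists_cons_of_ne_nil hp.ne_nil with ⟨x, t, rfl⟩
    exact ⟨t.length, _, hp, by simp⟩
  exact Nat.sInf_mem hne

lemma isWalk_concat (h : IsWalk E s a p) (hab : E a b) : IsWalk E s b (p ++ [b]) := by
  refine ⟨List.isChain_append.mpr ⟨h.1, List.isChain_singleton b, ?_⟩, ?_, by simp⟩
  · intro x hx y hy
    simp only [List.head?_cons, Option.mem_def, Option.some.injEq] at hy
    rw [h.2.2] at hx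
    simp only [Option.mem_def, Option.some.injEq] at hx
    subst hx; subst hy; exact hab
  · rcases List.exists_cons_of_ne_nil h.ne_nil with ⟨x, t, rfl⟩
    simpa using h.2.1

lemma hopDist_le_succ (hreach : DiReachable E s a) (hab : E a b) :
    hopDist E s b ≤ hopDist E s a + 1 := by
  obtain ⟨p, hp, hlen⟩ := hopDist_spec hreach
  apply Nat.sInf_le
  exact ⟨p ++ [b], isWalk_concat hp hab, by simp [hlen]⟩

end Aux
section Aux2
variable {E : V → V → Prop} {s : V}

/-- key: every walk to a vertex at hop-distance ≥ i passes through the unique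
vertex `u` at hop-distance `i`. -/
lemma mem_of_walk (hreach : ∀ v, DiReachable E s v) {i : ℕ} (hi : 1 ≤ i) {u : V}
    (huniq : ∀ v, hopDist E s v = i → v = u) :
    ∀ p v, IsWalk E s v p → i ≤ hopDist E s v → u ∈ p := by
  intro p
  induction p using List.reverseRecOn with
  | nil => intro v h; exact absurd h.ne_nil (by simp)
  | append_singleton l a ih =>
    intro v h hiv
    have hav : a = v := by simpa [List.getLast?_concat] using h.2.2
    subst hav
    rcases eq_or_lt_of_le hiv with heq | hlt
    · have : a = u := huniq a heq.symm
      subst this; simp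
    · rcases eq_or_ne l [] with rfl | hl
      · have : a = s := by simpa using h.2.1
        subst this
        rw [hopDist_self] at hlt
        omega
      · -- l is a walk from s to its last vertex b
        obtain ⟨b, hb⟩ := Option.isSome_iff_exists.mp (List.getLast?_isSome.mpr hl)
        have hch := List.isChain_append.mp h.1
        have hEba : E b a := hch.2.2 b hb a rfl
        have hwl : IsWalk E s b l := by
          refine ⟨hch.1, ?_, hb⟩
          rcases List.exists_cons_of_ne_nil hl with ⟨x, t, rfl⟩
          simpa using h.2.1
        have hba : hopDist E s a ≤ hopDist E s b + 1 := hopDist_le_succ (hreach b) hEba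
        have : i ≤ hopDist E s b := by omega
        exact List.mem_append_left _ (ih b hwl this)

lemma two_sublist_decomp {x : V} : ∀ p : List V, List.Sublist [x, x] p →
    ∃ l₁ l₂ l₃ : List V, p = l₁ ++ x :: l₂ ++ x :: l₃ := by
  intro p hp
  induction p with
  | nil => simp at hp
  | cons y t ih =>
    cases hp with
    | cons _ h => obtain ⟨l₁, l₂, l₃, rfl⟩ := ih h; exact ⟨y :: l₁, l₂, l₃, rfl⟩
    | cons_cons _ h =>
      obtain ⟨l₂, l₃, rfl⟩ := List.append_of_mem (List.singleton_sublist.mp h)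
      exact ⟨[], l₂, l₃, rfl⟩

lemma splice_walk {v x : V} {l₁ l₂ l₃ : List V}
    (h : IsWalk E s v (l₁ ++ x :: l₂ ++ x :: l₃)) : IsWalk E s v (l₁ ++ x :: l₃) := by
  obtain ⟨hc, hh, hg⟩ := h
  refine ⟨?_, ?_, ?_⟩
  · rw [show l₁ ++ x :: l₂ ++ x :: l₃ = l₁ ++ ((x :: l₂) ++ x :: l₃) by simp] at hc
    simp only [List.Chain'] at hc ⊢
    rw [List.isChain_append] at hc ⊢
    obtain ⟨h1, h2, h3⟩ := hc
    rw [List.isChain_append] at h2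
    exact ⟨h1, h2.2.1, by simpa using h3⟩
  · rcases eq_or_ne l₁ [] with rfl | hl
    · simpa using hh
    · rcases List.exists_cons_of_ne_nil hl with ⟨a, t, rfl⟩
      simpa using hh
  · rw [List.getLast?_append_cons] at hg
    rw [List.getLast?_append_cons]
    exact hg

lemma exists_nodup_walk {v : V} : ∀ n (p : List V), p.length ≤ n → IsWalk E s v p →
    ∃ q, IsWalk E s v q ∧ q.Nodup := by
  intro n
  induction n with
  | zero =>
    intro p hl h
    exact absurd (List.length_eq_zero_iff.mp (Nat.le_zero.mp hl)) h.ne_nil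
  | succ n ih =>
    intro p hl h
    by_cases hnd : p.Nodup
    · exact ⟨p, h, hnd⟩
    · rw [List.nodup_iff_sublist] at hnd
      push_neg at hnd
      obtain ⟨x, hx⟩ := hnd
      obtain ⟨l₁, l₂, l₃, rfl⟩ := two_sublist_decomp _ hx
      refine ih (l₁ ++ x :: l₃) ?_ (splice_walk h)
      have := hl
      simp only [List.length_append, List.length_cons] at this ⊢
      omega

end Aux2
section Aux3
variable {w : V → V → ℝ} {E : V → V → Prop} {s : V}

@[simp] lemma walkWeight_nil : walkWeight w ([] : List V) = 0 := by simp [walkWeight]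

@[simp] lemma walkWeight_singleton (x : V) : walkWeight w [x] = 0 := by simp [walkWeight]

lemma walkWeight_cons_cons (x y : V) (l : List V) :
    walkWeight w (x :: y :: l) = w x y + walkWeight w (y :: l) := by
  simp [walkWeight]

lemma walkWeight_nonneg (hw : ∀ x y, E x y → 0 < w x y) :
    ∀ p : List V, p.Chain' E → 0 ≤ walkWeight w p := by
  intro p hp
  induction p with
  | nil => simp
  | cons x t ih =>
    cases t with
    | nil => simp
    | cons y r =>
      rw [walkWeight_cons_cons]
      simp only [List.Chain'] at hp
      rw [List.isChain_cons_cons] at hp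
      have := ih hp.2
      have := hw x y hp.1
      linarith

lemma walkWeight_split (x : V) : ∀ (a b : List V),
    walkWeight w (a ++ x :: b) = walkWeight w (a ++ [x]) + walkWeight w (x :: b) := by
  intro a
  induction a with
  | nil => intro b; simp
  | cons h t ih =>
    intro b
    cases t with
    | nil => simp [walkWeight_cons_cons]
    | cons h' t' =>
      have : (h :: h' :: t') ++ x :: b = h :: h' :: (t' ++ x :: b) := by simp
      rw [this, walkWeight_cons_cons, show h' :: (t' ++ x :: b) = (h' :: t') ++ x :: b from rfl,
        ih, show (h :: h' :: t') ++ [x] = h :: h' :: (t' ++ [x]) by simp, walkWeight_cons_cons]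
      ring_nf
      rw [show h' :: (t' ++ [x]) = (h' :: t') ++ [x] from rfl]
      ring

lemma weightedDist_finite (v : V) [Fintype V] :
    {c | ∃ p, IsWalk E s v p ∧ p.Nodup ∧ walkWeight w p = c}.Finite := by
  have h1 : {l : List V | l.Nodup}.Finite :=
    Set.Finite.subset (List.finite_length_le V (Fintype.card V))
      (fun l (hl : l.Nodup) => hl.length_le_card)
  apply Set.Finite.subset (Set.Finite.image (walkWeight w) h1)
  rintro c ⟨p, _, hnd, rfl⟩
  exact Set.mem_image_of_mem _ hnd

end Aux3
/--
Let `G = (V, E)` be a finite directed graph with a designated source `s`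
from which every vertex is reachable.  Suppose for some `i ≥ 1` there is exactly one
vertex `u` whose hop-distance from `s` equals `i`.  Then for every positive edge weighting
`w` and every vertex `v` whose hop-distance from `s` is strictly greater than `i`, the
weighted distances satisfy `d_w(s, v) > d_w(s, u)`.  Consequently, `u` precedes `v` in
every linearization of `(G, s)`.
-/
theorem bottleneck_precedes
    [Fintype V] [DecidableEq V] (E : V → V → Prop) (s : V)
    (hreach : ∀ v, DiReachable E s v)
    (i : ℕ) (hi : 1 ≤ i) (u : V)
    (hu : hopDist E s u = i)
    (huniq : ∀ v, hopDist E s v = i → v = u) :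
    (∀ w : V → V → ℝ, (∀ x y, E x y → 0 < w x y) →
      ∀ v, i < hopDist E s v →
        weightedDist E w s u < weightedDist E w s v) ∧
    (∀ L, IsLinearization E s L → ∀ v, i < hopDist E s v →
      L.idxOf u < L.idxOf v) := by
  have part1 : ∀ w : V → V → ℝ, (∀ x y, E x y → 0 < w x y) →
      ∀ v, i < hopDist E s v →
        weightedDist E w s u < weightedDist E w s v := by
    intro w hw v hv
    obtain ⟨p0, hp0⟩ := hreach v
    obtain ⟨q, hq, hqnd⟩ := exists_nodup_walk p0.length p0 le_rfl hp0
    have hSv : ({c | ∃ p, IsWalk E s v p ∧ p.Nodup ∧ walkWeight w p = c}).Nonempty :=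
      ⟨walkWeight w q, q, hq, hqnd, rfl⟩
    have hmem := Set.Nonempty.csInf_mem hSv (weightedDist_finite v)
    obtain ⟨p, hp, hpnd, hpw⟩ := hmem
    have hup : u ∈ p := mem_of_walk hreach hi huniq p v hp (le_of_lt hv)
    obtain ⟨p₁, p₂, rfl⟩ := List.append_of_mem hup
    have huv : u ≠ v := fun h => by rw [h] at hu; omega
    have hp₂ : p₂ ≠ [] := by
      rintro rfl
      have h2 := hp.2.2
      rw [List.getLast?_append_cons] at h2
      simp only [List.getLast?_singleton, Option.some.injEq] at h2
      exact huv h2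
    have hc := List.isChain_append.mp hp.1
    have hq₁ : IsWalk E s u (p₁ ++ [u]) := by
      refine ⟨List.isChain_append.mpr ⟨hc.1, List.isChain_singleton u, ?_⟩, ?_, List.getLast?_concat⟩
      · intro x hx y hy
        simp only [List.head?_cons, Option.mem_def, Option.some.injEq] at hy
        subst hy
        exact hc.2.2 x hx u rfl
      · cases p₁ with
        | nil => simpa using hp.2.1
        | cons a t => simpa using hp.2.1
    have hsub : (p₁ ++ [u]).Sublist (p₁ ++ u :: p₂) :=
      (List.append_sublist_append_left p₁).mpr
        (List.cons_sublist_cons.mpr (List.nil_sublist _))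
    have hq₁nd : (p₁ ++ [u]).Nodup := hsub.nodup hpnd
    have hdu_le : weightedDist E w s u ≤ walkWeight w (p₁ ++ [u]) :=
      csInf_le (weightedDist_finite u).bddBelow ⟨_, hq₁, hq₁nd, rfl⟩
    obtain ⟨c, p₃, rfl⟩ := List.exists_cons_of_ne_nil hp₂
    have hcc : (u :: c :: p₃).Chain' E := hc.2.1
    have hEuc : E u c := (List.isChain_cons_cons.mp hcc).1
    have hpos : 0 < walkWeight w (u :: c :: p₃) := by
      rw [walkWeight_cons_cons]
      have h1 := walkWeight_nonneg hw (c :: p₃) (List.isChain_cons_cons.mp hcc).2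
      have h2 := hw u c hEuc
      linarith
    have hfin : weightedDist E w s v = walkWeight w (p₁ ++ u :: c :: p₃) := hpw.symm
    rw [hfin, walkWeight_split]
    linarith
  refine ⟨part1, ?_⟩
  intro L hL v hv
  obtain ⟨hnd, hmemL, w, hwpos, hdist, hpair⟩ := hL
  have hus : u ≠ s := fun h => by rw [h, hopDist_self] at hu; omega
  have hvs : v ≠ s := fun h => by rw [h, hopDist_self] at hv; omega
  have huv : u ≠ v := fun h => by rw [h] at hu; omega
  have hlt := part1 w hwpos v hv
  have huL : u ∈ L := (hmemL u).mpr hus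
  have hvL : v ∈ L := (hmemL v).mpr hvs
  have hiu : L.idxOf u < L.length := List.idxOf_lt_length_iff.mpr huL
  have hiv : L.idxOf v < L.length := List.idxOf_lt_length_iff.mpr hvL
  rcases lt_trichotomy (L.idxOf u) (L.idxOf v) with h | h | h
  · exact h
  · exact absurd ((List.idxOf_inj huL).mp h) huv
  · have := List.pairwise_iff_getElem.mp hpair _ _ hiv hiu h
    rw [List.getElem_idxOf hiv, List.getElem_idxOf hiu] at this
    exact absurd hlt (lt_asymm this)
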